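/- Any hash function family indexed by seeds of bit-length s, mapping binary strings of length m to outputs of bit-length o, with the property that for every pair of distinct inputs there exists a seed on which they hash differently (i.e., collision probability strictly less than 1 under a uniformly random seed), must satisfy 2^s ≥ m / o. -/

import Mathlib

/-! A family that separates points embeds the inputs `x` into the functions `S ↦ h S x`
from seeds to outputs, so `2 ^ m ≤ (2 ^ o) ^ (2 ^ s) = 2 ^ (o * 2 ^ s)`. -/

theorem Nat.card_le_card_pow_card_of_separates {ι α β : Type*} [Finite ι] [Finite β]
    (h : ι → α → β) (hsep : ∀ x y : α, x ≠ y → ∃ i, h i x ≠ h i y) :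
    Nat.card α ≤ Nat.card β ^ Nat.card ι := by
  have hinj : Function.Injective (fun x i => h i x) := by
    intro x y hxy
    by_contra hne
    obtain ⟨i, hi⟩ := hsep x y hne
    exact hi (congrFun hxy i)
  simpa only [Nat.card_fun] using Nat.card_le_card_of_injective _ hinj

/-- Any hash family `h : {0,1}^s × {0,1}^m → {0,1}^o` such that every pair of
distinct inputs is distinguished by some seed must satisfy `2^s ≥ m / o`,
equivalently `m ≤ o · 2^s`. -/
theorem hash_seed_length_lower_bound (s m o : ℕ)
    (h : (Fin s → Bool) → (Fin m → Bool) → (Fin o → Bool))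
    (hcoll : ∀ x y : Fin m → Bool, x ≠ y → ∃ S : Fin s → Bool, h S x ≠ h S y) :
    m ≤ o * 2 ^ s := by
  have hcard := Nat.card_le_card_pow_card_of_separates h hcoll
  simp only [Nat.card_fun, Nat.card_fin, Nat.card_eq_fintype_card (α := Bool),
    Fintype.card_bool, ← pow_mul] at hcard
  exact (Nat.pow_le_pow_iff_right one_lt_two).mp hcard
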